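/- arXiv:1309.3054 — 9 statements merged into one kernel-verified Lean document; each statement's English description precedes it below -/
import Mathlib

section
/- Let φ ∈ (0,1), ω = e^{2πiφ}, α ∈ ℂ and β = iα. Suppose λ ∈ ℂ satisfies λ² = ω[(1−2ω+ω²) − i(1−ω+ω²)]/(1−2ω+2ω²) (the denominator 1−2ω+2ω² being nonzero), and define θ_s = (√2/λ)(−λ² + ω(1−i)/2). Then |λ| = 1, θ_s² = ω/(ω²−3ω+1−i(ω²−1)), and the pair Ψ^L, Ψ^R defined by Ψ(x) = (−θ_s)^x · (α, (1−ω)α+ωβ) for x ≥ 1, Ψ(0) = (α, β), and Ψ(x) = θ_s^{−x} · ((ω−1)β+ωα, β) for x ≤ −1, satisfies the eigenvalue equations of the Wojcik model with eigenvalue λ. -/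
noncomputable section

/-- The coin phase of the Wojcik model: `ω` at the origin, `1` elsewhere. -/
def wojcikCoin (ω : ℂ) (x : ℤ) : ℂ := if x = 0 then ω else 1

/-- `ΨL, ΨR : ℤ → ℂ` satisfy the eigenvalue equations of the Wojcik model with
eigenvalue `lam` and phase `ω`. -/
def WojcikEigenEq (ω lam : ℂ) (ΨL ΨR : ℤ → ℂ) : Prop :=
  ∀ x : ℤ,
    lam * ΨL x = wojcikCoin ω (x + 1) / (Real.sqrt 2 : ℂ) * (ΨL (x + 1) + ΨR (x + 1)) ∧
    lam * ΨR x = wojcikCoin ω (x - 1) / (Real.sqrt 2 : ℂ) * (ΨL (x - 1) - ΨR (x - 1))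

/-- Left component of the explicit stationary state. -/
def wojcikPsiL (α β ω θ : ℂ) (x : ℤ) : ℂ :=
  if 1 ≤ x then (-θ) ^ x.toNat * α
  else if x = 0 then α
  else θ ^ (-x).toNat * ((ω - 1) * β + ω * α)

/-- Right component of the explicit stationary state. -/
def wojcikPsiR (α β ω θ : ℂ) (x : ℤ) : ℂ :=
  if 1 ≤ x then (-θ) ^ x.toNat * ((1 - ω) * α + ω * β)
  else if x = 0 then β
  else θ ^ (-x).toNat * β

/-!
Put `u = ω (1 - i)`; on the unit circle `|u|² = 2`. The hypothesis on `λ²` is equivalent to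
`2 λ² (1 - u) = u (2 - u)`, and `|u|² = 2` forces `|2 - u|² = 2 |1 - u|²`, whence `|λ| = 1`.
For the given `θ` the same relation reads `√2 λ = -θ (2 - u)` and `√2 λ θ (1 - u) = -u`.
These are exactly the matching conditions under which a state that is geometric with ratio `-θ`
on `x ≥ 0` and with ratio `θ` on `x ≤ 0` solves the eigenvalue equations, and squaring the first
one gives `θ² (2 - u) (1 - u) = u`.
-/

namespace Wojcik

open Complex

section Values

variable (α β ω θ : ℂ)

theorem wojcikPsiL_natCast (n : ℕ) : wojcikPsiL α β ω θ n = (-θ) ^ n * α := by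
  rcases n with _ | n
  · simp [wojcikPsiL]
  · simp only [wojcikPsiL, if_pos (by omega : (1 : ℤ) ≤ ((n + 1 : ℕ) : ℤ)),
      Int.toNat_natCast]

theorem wojcikPsiR_natCast_add_one (n : ℕ) :
    wojcikPsiR α β ω θ (n + 1) = (-θ) ^ (n + 1) * ((1 - ω) * α + ω * β) := by
  simp only [wojcikPsiR, if_pos (by omega : (1 : ℤ) ≤ n + 1),
    show ((n : ℤ) + 1).toNat = n + 1 by omega]

theorem wojcikPsiL_neg_natCast_add_one (n : ℕ) :
    wojcikPsiL α β ω θ (-(n + 1)) = θ ^ (n + 1) * ((ω - 1) * β + ω * α) := by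
  simp only [wojcikPsiL, if_neg (by omega : ¬ (1 : ℤ) ≤ -(n + 1)),
    if_neg (by omega : ¬ (-((n : ℤ) + 1) = 0)),
    show (-(-((n : ℤ) + 1))).toNat = n + 1 by omega]

theorem wojcikPsiR_neg_natCast (n : ℕ) : wojcikPsiR α β ω θ (-n) = θ ^ n * β := by
  rcases n with _ | n
  · simp [wojcikPsiR]
  · simp only [wojcikPsiR, if_neg (by omega : ¬ (1 : ℤ) ≤ -((n + 1 : ℕ) : ℤ)),
      if_neg (by omega : ¬ (-((n + 1 : ℕ) : ℤ) = 0)), neg_neg, Int.toNat_natCast]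

theorem wojcikPsiL_neg_natCast (n : ℕ) :
    wojcikPsiL α β ω θ (-n) = if n = 0 then α else θ ^ n * ((ω - 1) * β + ω * α) := by
  rcases n with _ | n
  · simp [wojcikPsiL]
  · simpa using wojcikPsiL_neg_natCast_add_one α β ω θ n

theorem wojcikPsiR_natCast (n : ℕ) :
    wojcikPsiR α β ω θ n = if n = 0 then β else (-θ) ^ n * ((1 - ω) * α + ω * β) := by
  rcases n with _ | n
  · simp [wojcikPsiR]
  · simpa using wojcikPsiR_natCast_add_one α β ω θ n

end Values

section Eigen

variable {α β ω θ : ℂ}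

-- At the origin the coin phase is absorbed by `α - ((1 - ω) α + ω β) = ω (α - β)` and
-- `(ω - 1) β + ω α + β = ω (α + β)`, so both half-line formulas extend to it.

theorem wojcikCoin_mul_psi_add_natCast_add_one (n : ℕ) :
    wojcikCoin ω (n + 1) * (wojcikPsiL α β ω θ (n + 1) + wojcikPsiR α β ω θ (n + 1)) =
      (-θ) ^ (n + 1) * (α + ((1 - ω) * α + ω * β)) := by
  rw [show (n : ℤ) + 1 = ((n + 1 : ℕ) : ℤ) by push_cast; ring, wojcikPsiL_natCast,
    Nat.cast_succ, wojcikPsiR_natCast_add_one, wojcikCoin, if_neg (by omega)]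
  ring

theorem wojcikCoin_mul_psi_add_neg_natCast (n : ℕ) :
    wojcikCoin ω (-n) * (wojcikPsiL α β ω θ (-n) + wojcikPsiR α β ω θ (-n)) =
      θ ^ n * ((ω - 1) * β + ω * α + β) := by
  rw [wojcikPsiL_neg_natCast, wojcikPsiR_neg_natCast, wojcikCoin]
  rcases n with _ | n
  · simp only [Nat.cast_zero, neg_zero, if_true, pow_zero]
    ring
  · simp only [if_neg (by omega : ¬ (-((n + 1 : ℕ) : ℤ) = 0)), Nat.add_one_ne_zero, if_false]
    ring

theorem wojcikCoin_mul_psi_sub_natCast (n : ℕ) :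
    wojcikCoin ω n * (wojcikPsiL α β ω θ n - wojcikPsiR α β ω θ n) =
      (-θ) ^ n * (α - ((1 - ω) * α + ω * β)) := by
  rw [wojcikPsiL_natCast, wojcikPsiR_natCast, wojcikCoin]
  rcases n with _ | n
  · simp only [Nat.cast_zero, if_true, pow_zero]
    ring
  · simp only [if_neg (by omega : ¬ (((n + 1 : ℕ) : ℤ) = 0)), Nat.add_one_ne_zero, if_false]
    ring

theorem wojcikCoin_mul_psi_sub_neg_natCast_add_one (n : ℕ) :
    wojcikCoin ω (-(n + 1)) *
        (wojcikPsiL α β ω θ (-(n + 1)) - wojcikPsiR α β ω θ (-(n + 1))) =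
      θ ^ (n + 1) * ((ω - 1) * β + ω * α - β) := by
  rw [wojcikPsiL_neg_natCast_add_one,
    show -((n : ℤ) + 1) = -((n + 1 : ℕ) : ℤ) by push_cast; ring, wojcikPsiR_neg_natCast,
    wojcikCoin, if_neg (by omega)]
  ring

theorem wojcikEigenEq_psi {lam : ℂ}
    (hA : lam * Real.sqrt 2 * α = -θ * (α + ((1 - ω) * α + ω * β)))
    (hB : lam * Real.sqrt 2 * (-θ) * ((1 - ω) * α + ω * β) = α - ((1 - ω) * α + ω * β))
    (hC : lam * Real.sqrt 2 * β = θ * ((ω - 1) * β + ω * α - β))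
    (hD : lam * Real.sqrt 2 * θ * ((ω - 1) * β + ω * α) = (ω - 1) * β + ω * α + β) :
    WojcikEigenEq ω lam (wojcikPsiL α β ω θ) (wojcikPsiR α β ω θ) := by
  have hs : ((Real.sqrt 2 : ℝ) : ℂ) ≠ 0 := by norm_num
  intro x
  rw [div_mul_eq_mul_div, div_mul_eq_mul_div, eq_div_iff hs, eq_div_iff hs]
  constructor
  · obtain ⟨n, rfl | rfl⟩ : ∃ n : ℕ, x = n ∨ x = -(n + 1) := by
      rcases x with n | n
      exacts [⟨n, .inl rfl⟩, ⟨n, .inr (Int.negSucc_eq n)⟩]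
    · rw [wojcikCoin_mul_psi_add_natCast_add_one, wojcikPsiL_natCast]
      linear_combination (-θ) ^ n * hA
    · rw [show -((n : ℤ) + 1) + 1 = -n by ring, wojcikCoin_mul_psi_add_neg_natCast,
        wojcikPsiL_neg_natCast_add_one]
      linear_combination θ ^ n * hD
  · obtain ⟨n, rfl | rfl⟩ : ∃ n : ℕ, x = n + 1 ∨ x = -n := by
      rcases le_or_gt x 0 with hx | hx
      exacts [⟨(-x).toNat, .inr (by omega)⟩, ⟨(x - 1).toNat, .inl (by omega)⟩]
    · rw [add_sub_cancel_right, wojcikCoin_mul_psi_sub_natCast, wojcikPsiR_natCast_add_one]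
      linear_combination (-θ) ^ n * hB
    · rw [show -(n : ℤ) - 1 = -(n + 1) by ring, wojcikCoin_mul_psi_sub_neg_natCast_add_one,
        wojcikPsiR_neg_natCast]
      linear_combination θ ^ n * hC

theorem wojcikEigenEq_psi_of_eq_I_mul {lam : ℂ} (hβ : β = I * α)
    (h₁ : lam * Real.sqrt 2 = -θ * (2 - ω * (1 - I)))
    (h₂ : lam * θ * (1 - ω * (1 - I)) * Real.sqrt 2 = -(ω * (1 - I))) :
    WojcikEigenEq ω lam (wojcikPsiL α β ω θ) (wojcikPsiR α β ω θ) := by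
  subst hβ
  apply wojcikEigenEq_psi
  · linear_combination α * h₁
  · linear_combination -α * h₂
  · linear_combination I * α * h₁ - θ * ω * α * I_sq
  · linear_combination -I * α * h₂ + (lam * θ * α * Real.sqrt 2 * ω - ω * α) * I_sq

end Eigen

section Scalars

variable {u : ℂ}

theorem one_sub_ne_zero_of_normSq_eq_two (hu : normSq u = 2) : 1 - u ≠ 0 :=
  sub_ne_zero.2 fun h => by rw [← h] at hu; norm_num at hu

theorem two_sub_ne_zero_of_normSq_eq_two (hu : normSq u = 2) : 2 - u ≠ 0 :=
  sub_ne_zero.2 fun h => by rw [← h] at hu; norm_num at hu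

theorem normSq_two_sub_of_normSq_eq_two (hu : normSq u = 2) :
    normSq (2 - u) = 2 * normSq (1 - u) := by
  simp only [normSq_apply, sub_re, sub_im, re_ofNat, im_ofNat, one_re, one_im] at hu ⊢
  linear_combination -hu

theorem norm_eq_one_of_two_mul_sq_mul_one_sub {z : ℂ} (hu : normSq u = 2)
    (h : 2 * z ^ 2 * (1 - u) = u * (2 - u)) : ‖z‖ = 1 := by
  have h' := congrArg normSq h
  simp only [map_mul, map_pow, normSq_two_sub_of_normSq_eq_two hu, hu, normSq_ofNat] at h'
  have hz : normSq z ^ 2 = 1 := by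
    have := (normSq_pos.2 (one_sub_ne_zero_of_normSq_eq_two hu)).ne'
    apply mul_right_cancel₀ this
    linear_combination h' / 4
  rw [← pow_eq_one_iff_of_nonneg (norm_nonneg z) two_ne_zero, Complex.sq_norm]
  exact (pow_eq_one_iff_of_nonneg (normSq_nonneg z) two_ne_zero).1 hz

variable {s lam θ : ℂ}

theorem matching_relations (hs : s ^ 2 = 2) (hlam : lam ≠ 0)
    (hrel : 2 * lam ^ 2 * (1 - u) = u * (2 - u)) (hθ : θ = s / lam * (-lam ^ 2 + u / 2)) :
    lam * s = -θ * (2 - u) ∧ lam * θ * (1 - u) * s = -u := by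
  have hlθ : lam * θ = s * (-lam ^ 2 + u / 2) := by
    rw [hθ]
    field_simp
  constructor
  · apply mul_left_cancel₀ hlam
    linear_combination (2 - u) * hlθ - s / 2 * hrel
  · linear_combination (1 - u) * s * hlθ + (-lam ^ 2 + u / 2) * (1 - u) * hs - hrel

theorem sq_mul_two_sub_mul_one_sub (hs : s ^ 2 = 2) (hu : 2 - u ≠ 0)
    (hrel : 2 * lam ^ 2 * (1 - u) = u * (2 - u)) (h₁ : lam * s = -θ * (2 - u)) :
    θ ^ 2 * (2 - u) * (1 - u) = u := by
  apply mul_left_cancel₀ hu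
  linear_combination (1 - u) * (θ * (2 - u) - lam * s) * h₁ + (1 - u) * lam ^ 2 * hs + hrel

end Scalars

theorem normSq_mul_one_sub_I {ω : ℂ} (hω : ‖ω‖ = 1) : normSq (ω * (1 - I)) = 2 := by
  rw [map_mul, normSq_eq_norm_sq, hω, normSq_apply]
  norm_num

theorem two_mul_sq_mul_one_sub_eq {ω lam : ℂ} (hden : 1 - 2 * ω + 2 * ω ^ 2 ≠ 0)
    (hlam : lam ^ 2 =
      ω * ((1 - 2 * ω + ω ^ 2) - I * (1 - ω + ω ^ 2)) / (1 - 2 * ω + 2 * ω ^ 2)) :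
    2 * lam ^ 2 * (1 - ω * (1 - I)) = ω * (1 - I) * (2 - ω * (1 - I)) := by
  have hcleared : lam ^ 2 * (1 - 2 * ω + 2 * ω ^ 2) =
      ω * ((1 - 2 * ω + ω ^ 2) - I * (1 - ω + ω ^ 2)) := by
    rw [hlam, div_mul_cancel₀ _ hden]
  apply mul_right_cancel₀ hden
  linear_combination 2 * (1 - ω * (1 - I)) * hcleared - ω ^ 2 * I_sq

theorem sq_eq_div_of_mul_one_sub_I {ω θ : ℂ} (hu : normSq (ω * (1 - I)) = 2)
    (h : θ ^ 2 * (2 - ω * (1 - I)) * (1 - ω * (1 - I)) = ω * (1 - I)) :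
    θ ^ 2 = ω / (ω ^ 2 - 3 * ω + 1 - I * (ω ^ 2 - 1)) := by
  have hfac : (2 - ω * (1 - I)) * (1 - ω * (1 - I)) =
      (1 - I) * (ω ^ 2 - 3 * ω + 1 - I * (ω ^ 2 - 1)) := by
    linear_combination I_sq
  have hI : (1 - I : ℂ) ≠ 0 := sub_ne_zero.2 fun h => by simpa using congrArg im h
  have hM : ω ^ 2 - 3 * ω + 1 - I * (ω ^ 2 - 1) ≠ 0 := by
    refine right_ne_zero_of_mul (hfac ▸ mul_ne_zero ?_ ?_)
    exacts [two_sub_ne_zero_of_normSq_eq_two hu, one_sub_ne_zero_of_normSq_eq_two hu]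
  rw [eq_div_iff hM]
  apply mul_left_cancel₀ hI
  linear_combination h - θ ^ 2 * hfac

end Wojcik

theorem wojcik_eigen_solution_beta_eq_i_alpha_general
    (φ : ℝ) (ω α β lam θ : ℂ)
    (hω : ω = Complex.exp (2 * (Real.pi : ℂ) * Complex.I * (φ : ℂ)))
    (hβ : β = Complex.I * α)
    (hden : 1 - 2 * ω + 2 * ω ^ 2 ≠ 0)
    (hlam : lam ^ 2 =
      ω * ((1 - 2 * ω + ω ^ 2) - Complex.I * (1 - ω + ω ^ 2)) / (1 - 2 * ω + 2 * ω ^ 2))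
    (hθ : θ = (Real.sqrt 2 : ℂ) / lam * (-lam ^ 2 + ω * (1 - Complex.I) / 2)) :
    ‖lam‖ = 1 ∧
    θ ^ 2 = ω / (ω ^ 2 - 3 * ω + 1 - Complex.I * (ω ^ 2 - 1)) ∧
    WojcikEigenEq ω lam (wojcikPsiL α β ω θ) (wojcikPsiR α β ω θ) := by
  have hω1 : ‖ω‖ = 1 := by
    rw [hω, show 2 * (Real.pi : ℂ) * Complex.I * φ =
      ((2 * Real.pi * φ : ℝ) : ℂ) * Complex.I by push_cast; ring]
    exact Complex.norm_exp_ofReal_mul_I _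
  have hu := Wojcik.normSq_mul_one_sub_I hω1
  have hrel := Wojcik.two_mul_sq_mul_one_sub_eq hden hlam
  have hnorm := Wojcik.norm_eq_one_of_two_mul_sq_mul_one_sub hu hrel
  have hs : ((Real.sqrt 2 : ℝ) : ℂ) ^ 2 = 2 := by norm_cast; norm_num
  obtain ⟨h₁, h₂⟩ :=
    Wojcik.matching_relations hs (norm_ne_zero_iff.1 (by simp [hnorm])) hrel hθ
  refine ⟨hnorm, Wojcik.sq_eq_div_of_mul_one_sub_I hu ?_,
    Wojcik.wojcikEigenEq_psi_of_eq_I_mul hβ h₁ h₂⟩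
  exact Wojcik.sq_mul_two_sub_mul_one_sub hs
    (Wojcik.two_sub_ne_zero_of_normSq_eq_two hu) hrel h₁

theorem wojcik_eigen_solution_beta_eq_i_alpha
    (φ : ℝ) (hφ : φ ∈ Set.Ioo (0 : ℝ) 1) (ω α β lam θ : ℂ)
    (hω : ω = Complex.exp (2 * (Real.pi : ℂ) * Complex.I * (φ : ℂ)))
    (hβ : β = Complex.I * α)
    (hden : 1 - 2 * ω + 2 * ω ^ 2 ≠ 0)
    (hlam : lam ^ 2 =
      ω * ((1 - 2 * ω + ω ^ 2) - Complex.I * (1 - ω + ω ^ 2)) / (1 - 2 * ω + 2 * ω ^ 2))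
    (hθ : θ = (Real.sqrt 2 : ℂ) / lam * (-lam ^ 2 + ω * (1 - Complex.I) / 2)) :
    ‖lam‖ = 1 ∧
    θ ^ 2 = ω / (ω ^ 2 - 3 * ω + 1 - Complex.I * (ω ^ 2 - 1)) ∧
    WojcikEigenEq ω lam (wojcikPsiL α β ω θ) (wojcikPsiR α β ω θ) :=
  wojcik_eigen_solution_beta_eq_i_alpha_general φ ω α β lam θ hω hβ hden hlam hθ

end
end

section
/- Let φ ∈ (0,1), ω = e^{2πiφ}, α ∈ ℂ and β = −iα. Suppose λ ∈ ℂ satisfies λ² = ω[(1−2ω+ω²) + i(1−ω+ω²)]/(1−2ω+2ω²) (the denominator 1−2ω+2ω² being nonzero), and define θ_s = (√2/λ)(−λ² + ω(1+i)/2). Then |λ| = 1, θ_s² = ω/(ω²−3ω+1+i(ω²−1)), and the pair Ψ^L, Ψ^R defined by Ψ(x) = (−θ_s)^x · (α, (1−ω)α+ωβ) for x ≥ 1, Ψ(0) = (α, β), and Ψ(x) = θ_s^{−x} · ((ω−1)β+ωα, β) for x ≤ −1, satisfies the eigenvalue equations of the Wojcik model with eigenvalue λ. -/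
noncomputable section

/-!
Clearing the common factor `2ω - (1 + i)` from the eigenvalue relation leaves
`λ² (2ω - c) = (1 + i) ω (ω - c)` with `c = 1 - i`. For `|ω| = 1` the parallelogram law
`|2ω - c|² + |c|² = 2 |ω - c|² + 2 |ω|²` gives `|2ω - c| = √2 |ω - c| = |(1 + i)(ω - c)|`,
hence `|λ| = 1`. The same relation gives `θ λ (2ω - c) = √2 ω`, from which `θ²` follows.
Since `Ψ` is geometric on each half-line, the eigenvalue equations at all sites reduce to
those at the sites `0` and `±1`, which become polynomial identities in `ω` after
multiplication by `λ (2ω - c)`.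
-/

open Complex

theorem Complex.norm_two_mul_sub_eq_sqrt_two_mul {ω c : ℂ} (hω : ‖ω‖ = 1) (hc : ‖c‖ = √2) :
    ‖2 * ω - c‖ = √2 * ‖ω - c‖ := by
  have hpar := parallelogram_law_with_norm ℝ (ω - c) ω
  rw [show ω - c + ω = 2 * ω - c by ring, sub_sub_cancel_left, norm_neg, hω, hc,
    Real.sq_sqrt zero_le_two] at hpar
  rw [← sq_eq_sq₀ (norm_nonneg _) (by positivity), mul_pow, Real.sq_sqrt zero_le_two]
  linarith

theorem Complex.norm_one_sub_I : ‖1 - I‖ = √2 := by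
  rw [norm_def, normSq_apply]; norm_num

theorem Complex.norm_one_add_I : ‖1 + I‖ = √2 := by
  rw [norm_def, normSq_apply]; norm_num

theorem wojcik_lam_sq_mul_eq {ω lam : ℂ} (hden : 1 - 2 * ω + 2 * ω ^ 2 ≠ 0)
    (hlam : lam ^ 2 =
      ω * ((1 - 2 * ω + ω ^ 2) + I * (1 - ω + ω ^ 2)) / (1 - 2 * ω + 2 * ω ^ 2)) :
    lam ^ 2 * (2 * ω - (1 - I)) = ω * (1 + I) * (ω - (1 - I)) := by
  have hfac : 1 - 2 * ω + 2 * ω ^ 2 = (2 * ω - (1 + I)) * (2 * ω - (1 - I)) / 2 := by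
    linear_combination (1/2 : ℂ) * I_sq
  rw [eq_div_iff hden] at hlam
  have hne : 2 * ω - (1 + I) ≠ 0 := fun h => hden (by rw [hfac, h, zero_mul, zero_div])
  apply mul_left_cancel₀ hne
  linear_combination 2 * hlam + (ω + ω * I - ω ^ 2 - lam ^ 2) * I_sq

theorem two_mul_sub_one_sub_I_ne_zero {ω : ℂ} (hω : ‖ω‖ = 1) : 2 * ω - (1 - I) ≠ 0 := by
  rw [sub_ne_zero]
  intro h
  have h2 := congrArg norm h
  rw [norm_mul, hω, norm_one_sub_I, RCLike.norm_ofNat, mul_one] at h2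
  nlinarith [Real.sq_sqrt zero_le_two]

theorem wojcik_norm_lam {ω lam : ℂ} (hω : ‖ω‖ = 1)
    (hlam : lam ^ 2 * (2 * ω - (1 - I)) = ω * (1 + I) * (ω - (1 - I))) : ‖lam‖ = 1 := by
  have hnorm := congrArg norm hlam
  rw [norm_mul, norm_mul, norm_mul, norm_pow, hω, norm_one_add_I, one_mul,
    ← norm_two_mul_sub_eq_sqrt_two_mul hω norm_one_sub_I] at hnorm
  have hsq : ‖lam‖ ^ 2 = 1 :=
    mul_right_cancel₀ (norm_ne_zero_iff.mpr (two_mul_sub_one_sub_I_ne_zero hω))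
      (hnorm.trans (one_mul _).symm)
  exact (pow_eq_one_iff_of_nonneg (norm_nonneg _) two_ne_zero).mp hsq

theorem wojcik_theta_mul_lam {ω lam θ : ℂ} (hlam0 : lam ≠ 0)
    (hlam : lam ^ 2 * (2 * ω - (1 - I)) = ω * (1 + I) * (ω - (1 - I)))
    (hθ : θ = (√2 : ℂ) / lam * (-lam ^ 2 + ω * (1 + I) / 2)) :
    θ * lam * (2 * ω - (1 - I)) = √2 * ω := by
  rw [hθ, div_mul_eq_mul_div, div_mul_cancel₀ _ hlam0]
  linear_combination (-√2 : ℂ) * hlam - (√2 * ω / 2 : ℂ) * I_sq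

theorem wojcik_theta_sq {ω lam θ : ℂ} (hω0 : ω ≠ 0)
    (hlam : lam ^ 2 * (2 * ω - (1 - I)) = ω * (1 + I) * (ω - (1 - I)))
    (hθlam : θ * lam * (2 * ω - (1 - I)) = √2 * ω) :
    θ ^ 2 = ω / (ω ^ 2 - 3 * ω + 1 + I * (ω ^ 2 - 1)) := by
  have hsqrt : (√2 : ℂ) ^ 2 = 2 := by norm_cast; exact Real.sq_sqrt zero_le_two
  have hkey : θ ^ 2 * (ω ^ 2 - 3 * ω + 1 + I * (ω ^ 2 - 1)) = ω := by
    apply mul_left_cancel₀ (mul_ne_zero two_ne_zero hω0)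
    linear_combination (-θ ^ 2 * (2 * ω - (1 - I))) * hlam
      + (θ * lam * (2 * ω - (1 - I)) + √2 * ω) * hθlam + ω ^ 2 * hsqrt
      + θ ^ 2 * ω * (1 - I - 3 * ω) * I_sq
  exact eq_div_of_mul_eq (fun h => hω0 (by rw [← hkey, h, mul_zero])) hkey

section WojcikPsi

variable {α β ω θ : ℂ}

theorem wojcikCoin_zero (ω : ℂ) : wojcikCoin ω 0 = ω := if_pos rfl

theorem wojcikCoin_of_ne_zero (ω : ℂ) {x : ℤ} (hx : x ≠ 0) : wojcikCoin ω x = 1 := if_neg hx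

theorem wojcikPsiL_zero : wojcikPsiL α β ω θ 0 = α := by simp [wojcikPsiL]

theorem wojcikPsiR_zero : wojcikPsiR α β ω θ 0 = β := by simp [wojcikPsiR]

theorem wojcikPsiL_natCast (n : ℕ) : wojcikPsiL α β ω θ n = (-θ) ^ n * α := by
  rcases n with _ | n <;> simp [wojcikPsiL]

theorem wojcikPsiR_natCast_add_one (n : ℕ) :
    wojcikPsiR α β ω θ (n + 1) = (-θ) ^ (n + 1) * ((1 - ω) * α + ω * β) := by
  simp [wojcikPsiR]

theorem wojcikPsiR_neg_natCast (n : ℕ) : wojcikPsiR α β ω θ (-n) = θ ^ n * β := by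
  rcases n with _ | n
  · simp [wojcikPsiR]
  · rw [wojcikPsiR, if_neg (by omega), if_neg (by omega), neg_neg, Int.toNat_natCast]

theorem wojcikPsiL_neg_natCast_sub_one (n : ℕ) :
    wojcikPsiL α β ω θ (-n - 1) = θ ^ (n + 1) * ((ω - 1) * β + ω * α) := by
  rw [wojcikPsiL, if_neg (by omega), if_neg (by omega),
    show -(-(n : ℤ) - 1) = ((n + 1 : ℕ) : ℤ) by push_cast; ring, Int.toNat_natCast]

theorem wojcikEigenEq_wojcikPsi {lam : ℂ}
    (hL0 : lam * α = -θ * (α + ((1 - ω) * α + ω * β)) / √2)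
    (hR1 : lam * (-θ) * ((1 - ω) * α + ω * β) = ω * (α - β) / √2)
    (hR0 : lam * β = θ * ((ω - 1) * β + ω * α - β) / √2)
    (hLm1 : lam * θ * ((ω - 1) * β + ω * α) = ω * (α + β) / √2) :
    WojcikEigenEq ω lam (wojcikPsiL α β ω θ) (wojcikPsiR α β ω θ) := by
  intro x
  constructor
  · obtain ⟨n, rfl | rfl⟩ : ∃ n : ℕ, x = n ∨ x = -n - 1 := by
      rcases x with n | n
      exacts [⟨n, .inl rfl⟩, ⟨n, .inr (by rw [Int.negSucc_eq]; ring)⟩]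
    · rw [wojcikCoin_of_ne_zero ω (by omega), wojcikPsiR_natCast_add_one, ← Nat.cast_add_one,
        wojcikPsiL_natCast, wojcikPsiL_natCast]
      linear_combination (-θ) ^ n * hL0
    · rw [sub_add_cancel, wojcikPsiL_neg_natCast_sub_one, wojcikPsiR_neg_natCast]
      rcases n with _ | n
      · rw [Nat.cast_zero, neg_zero, wojcikCoin_zero, wojcikPsiL_zero]
        linear_combination hLm1
      · rw [wojcikCoin_of_ne_zero ω (by omega),
          show -((n + 1 : ℕ) : ℤ) = -n - 1 by push_cast; ring, wojcikPsiL_neg_natCast_sub_one]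
        linear_combination θ ^ (n + 1) * hLm1
  · obtain ⟨n, rfl | rfl⟩ : ∃ n : ℕ, x = n + 1 ∨ x = -n := by
      rcases x with (_ | n) | n
      exacts [⟨0, .inr (by simp)⟩, ⟨n, .inl (by rw [Int.ofNat_eq_natCast]; push_cast; ring)⟩,
        ⟨n + 1, .inr (by rw [Int.negSucc_eq]; push_cast; ring)⟩]
    · rw [add_sub_cancel_right, wojcikPsiR_natCast_add_one, wojcikPsiL_natCast]
      rcases n with _ | n
      · rw [Nat.cast_zero, wojcikCoin_zero, wojcikPsiR_zero]
        linear_combination hR1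
      · rw [wojcikCoin_of_ne_zero ω (by omega), Nat.cast_add_one, wojcikPsiR_natCast_add_one]
        linear_combination (-θ) ^ (n + 1) * hR1
    · rw [wojcikCoin_of_ne_zero ω (by omega), wojcikPsiL_neg_natCast_sub_one,
        wojcikPsiR_neg_natCast, show -(n : ℤ) - 1 = -((n + 1 : ℕ) : ℤ) by push_cast; ring,
        wojcikPsiR_neg_natCast]
      linear_combination θ ^ n * hR0

end WojcikPsi

theorem wojcikEigenEq_wojcikPsi_neg_I_mul {ω lam θ : ℂ} (α : ℂ) (hlam0 : lam ≠ 0)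
    (he : 2 * ω - (1 - I) ≠ 0)
    (hlam : lam ^ 2 * (2 * ω - (1 - I)) = ω * (1 + I) * (ω - (1 - I)))
    (hθlam : θ * lam * (2 * ω - (1 - I)) = √2 * ω) :
    WojcikEigenEq ω lam (wojcikPsiL α (-I * α) ω θ) (wojcikPsiR α (-I * α) ω θ) := by
  have hsqrt : (√2 : ℂ) ^ 2 = 2 := by norm_cast; exact Real.sq_sqrt zero_le_two
  have hsqrt0 : (√2 : ℂ) ≠ 0 := by norm_cast; positivity
  apply wojcikEigenEq_wojcikPsi <;> rw [eq_div_iff hsqrt0]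
  · apply mul_left_cancel₀ (mul_ne_zero hlam0 he)
    linear_combination (√2 * α) * hlam + (2 - (1 + I) * ω) * α * hθlam
      + ω * α * √2 * I_sq
  · apply mul_left_cancel₀ he
    linear_combination (-√2 * (1 - (1 + I) * ω) * α) * hθlam - ω * (1 - (1 + I) * ω) * α * hsqrt
      - ω * α * I_sq
  · apply mul_left_cancel₀ (mul_ne_zero hlam0 he)
    linear_combination (-I * α * √2) * hlam - ((1 - I) * ω + 2 * I) * α * hθlam
      - ω * (I + ω) * α * √2 * I_sq
  · apply mul_left_cancel₀ he
    linear_combination (√2 * ((1 - I) * ω + I) * α) * hθlam + ω * ((1 - I) * ω + I) * α * hsqrt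
      + ω * α * I_sq

theorem wojcik_eigen_solution_beta_eq_neg_i_alpha_general
    (φ : ℝ) (ω α β lam θ : ℂ)
    (hω : ω = Complex.exp (2 * (Real.pi : ℂ) * Complex.I * (φ : ℂ)))
    (hβ : β = -Complex.I * α)
    (hden : 1 - 2 * ω + 2 * ω ^ 2 ≠ 0)
    (hlam : lam ^ 2 =
      ω * ((1 - 2 * ω + ω ^ 2) + Complex.I * (1 - ω + ω ^ 2)) / (1 - 2 * ω + 2 * ω ^ 2))
    (hθ : θ = (Real.sqrt 2 : ℂ) / lam * (-lam ^ 2 + ω * (1 + Complex.I) / 2)) :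
    ‖lam‖ = 1 ∧
    θ ^ 2 = ω / (ω ^ 2 - 3 * ω + 1 + Complex.I * (ω ^ 2 - 1)) ∧
    WojcikEigenEq ω lam (wojcikPsiL α β ω θ) (wojcikPsiR α β ω θ) := by
  have hω1 : ‖ω‖ = 1 := by rw [hω, norm_exp]; simp
  have hω0 : ω ≠ 0 := norm_ne_zero_iff.mp (hω1 ▸ one_ne_zero)
  have hlam' := wojcik_lam_sq_mul_eq hden hlam
  have hnorm := wojcik_norm_lam hω1 hlam'
  have hlam0 : lam ≠ 0 := norm_ne_zero_iff.mp (hnorm ▸ one_ne_zero)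
  have hθlam := wojcik_theta_mul_lam hlam0 hlam' hθ
  subst hβ
  exact ⟨hnorm, wojcik_theta_sq hω0 hlam' hθlam, wojcikEigenEq_wojcikPsi_neg_I_mul α hlam0
    (two_mul_sub_one_sub_I_ne_zero hω1) hlam' hθlam⟩

theorem wojcik_eigen_solution_beta_eq_neg_i_alpha
    (φ : ℝ) (hφ : φ ∈ Set.Ioo (0 : ℝ) 1) (ω α β lam θ : ℂ)
    (hω : ω = Complex.exp (2 * (Real.pi : ℂ) * Complex.I * (φ : ℂ)))
    (hβ : β = -Complex.I * α)
    (hden : 1 - 2 * ω + 2 * ω ^ 2 ≠ 0)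
    (hlam : lam ^ 2 =
      ω * ((1 - 2 * ω + ω ^ 2) + Complex.I * (1 - ω + ω ^ 2)) / (1 - 2 * ω + 2 * ω ^ 2))
    (hθ : θ = (Real.sqrt 2 : ℂ) / lam * (-lam ^ 2 + ω * (1 + Complex.I) / 2)) :
    ‖lam‖ = 1 ∧
    θ ^ 2 = ω / (ω ^ 2 - 3 * ω + 1 + Complex.I * (ω ^ 2 - 1)) ∧
    WojcikEigenEq ω lam (wojcikPsiL α β ω θ) (wojcikPsiR α β ω θ) :=
  wojcik_eigen_solution_beta_eq_neg_i_alpha_general φ ω α β lam θ hω hβ hden hlam hθ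

end
end

section
/- Let φ ∈ (0,1), ω = e^{2πiφ}, α ∈ ℂ, β = iα, and let θ_s ∈ ℂ satisfy θ_s² = ω/(ω²−3ω+1−i(ω²−1)). Define Ψ : ℤ → ℂ² by Ψ(x) = (−θ_s)^x · (α, (1−ω)α+ωβ) for x ≥ 1, Ψ(0) = (α, β), and Ψ(x) = θ_s^{−x} · ((ω−1)β+ωα, β) for x ≤ −1. Then |θ_s|² = 1/(3−2cos(2πφ)−2sin(2πφ)), and the measure μ(x) = |Ψ^L(x)|² + |Ψ^R(x)|² satisfies μ(0) = 2|α|² and μ(x) = 2|α|² · |θ_s|^{2|x|} · (2−cos(2πφ)−sin(2πφ)) for every x ≠ 0; in particular μ is symmetric with respect to the origin. -/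
/-!
With `β = iα` the two off-diagonal amplitudes are `(1 + (i - 1)ω)α` and `((1 + i)ω - i)α`,
and for `|ω| = 1` both factors have squared modulus `3 - 2 Re ω - 2 Im ω`; the denominator
in `θ²` is `ω (2 Re ω + 2 Im ω - 3)`, of modulus `3 - 2 Re ω - 2 Im ω` as well. So on either
side of the origin `μ(x) = |θ|^{2|x|} |α|² (1 + 3 - 2 Re ω - 2 Im ω)`.
-/

noncomputable section

/-- The measure at position `x` associated with the explicit stationary state. -/
def wojcikMu (α β ω θ : ℂ) (x : ℤ) : ℝ :=
  ‖wojcikPsiL α β ω θ x‖ ^ 2 + ‖wojcikPsiR α β ω θ x‖ ^ 2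

open Complex

section UnitCircle

variable {ω : ℂ} (hω : ‖ω‖ = 1)
include hω

theorem re_sq_add_im_sq_of_norm_eq_one : ω.re ^ 2 + ω.im ^ 2 = 1 := by
  have h := Complex.sq_norm ω
  rw [hω, normSq_apply] at h
  linear_combination -h

theorem two_mul_re_add_two_mul_im_lt_three : 2 * ω.re + 2 * ω.im < 3 := by
  nlinarith [re_sq_add_im_sq_of_norm_eq_one hω, sq_nonneg (ω.re - ω.im),
    sq_nonneg (ω.re + ω.im - 3 / 2)]

/-- On the unit circle, `ω² + 1 = 2 Re ω · ω` and `ω² - 1 = 2i Im ω · ω`. -/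
theorem wojcik_denom_eq_mul :
    ω ^ 2 - 3 * ω + 1 - I * (ω ^ 2 - 1) = ω * ((2 * ω.re + 2 * ω.im - 3 : ℝ) : ℂ) := by
  have h := re_sq_add_im_sq_of_norm_eq_one hω
  apply Complex.ext <;> simp [pow_two] <;> linarith

theorem norm_wojcik_denom :
    ‖ω ^ 2 - 3 * ω + 1 - I * (ω ^ 2 - 1)‖ = 3 - 2 * ω.re - 2 * ω.im := by
  rw [wojcik_denom_eq_mul hω, norm_mul, hω, one_mul, norm_real, Real.norm_eq_abs,
    abs_of_neg (by linarith [two_mul_re_add_two_mul_im_lt_three hω])]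
  ring

theorem norm_sq_of_sq_eq_wojcik {θ : ℂ} (hθ : θ ^ 2 = ω / (ω ^ 2 - 3 * ω + 1 - I * (ω ^ 2 - 1))) :
    ‖θ‖ ^ 2 = 1 / (3 - 2 * ω.re - 2 * ω.im) := by
  rw [← norm_pow, hθ, norm_div, hω, norm_wojcik_denom hω]

theorem norm_sq_one_sub_mul_add_mul_I_mul (α : ℂ) :
    ‖(1 - ω) * α + ω * (I * α)‖ ^ 2 = (3 - 2 * ω.re - 2 * ω.im) * ‖α‖ ^ 2 := by
  have h := re_sq_add_im_sq_of_norm_eq_one hω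
  rw [show (1 - ω) * α + ω * (I * α) = (1 + (I - 1) * ω) * α by ring, norm_mul, mul_pow]
  congr 1
  rw [Complex.sq_norm, normSq_apply]
  simp only [add_re, add_im, sub_re, sub_im, mul_re, mul_im, one_re, one_im, I_re, I_im]
  linear_combination 2 * h

theorem norm_sq_sub_one_mul_I_mul_add_mul (α : ℂ) :
    ‖(ω - 1) * (I * α) + ω * α‖ ^ 2 = (3 - 2 * ω.re - 2 * ω.im) * ‖α‖ ^ 2 := by
  have h := re_sq_add_im_sq_of_norm_eq_one hω
  rw [show (ω - 1) * (I * α) + ω * α = ((1 + I) * ω - I) * α by ring, norm_mul, mul_pow]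
  congr 1
  rw [Complex.sq_norm, normSq_apply]
  simp only [add_re, add_im, sub_re, sub_im, mul_re, mul_im, one_re, one_im, I_re, I_im]
  linear_combination 2 * h

end UnitCircle

section Measure

variable (α β ω θ : ℂ)

theorem wojcikMu_zero : wojcikMu α β ω θ 0 = ‖α‖ ^ 2 + ‖β‖ ^ 2 := by
  simp [wojcikMu, wojcikPsiL, wojcikPsiR]

theorem wojcikMu_of_pos {x : ℤ} (hx : 0 < x) :
    wojcikMu α β ω θ x =
      ‖θ‖ ^ (2 * x.natAbs) * (‖α‖ ^ 2 + ‖(1 - ω) * α + ω * β‖ ^ 2) := by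
  have hx' : 1 ≤ x := hx
  have hn : x.toNat = x.natAbs := by omega
  simp only [wojcikMu, wojcikPsiL, wojcikPsiR, if_pos hx', norm_mul, norm_pow, norm_neg, hn]
  ring

theorem wojcikMu_of_neg {x : ℤ} (hx : x < 0) :
    wojcikMu α β ω θ x =
      ‖θ‖ ^ (2 * x.natAbs) * (‖(ω - 1) * β + ω * α‖ ^ 2 + ‖β‖ ^ 2) := by
  have hx' : ¬1 ≤ x := by omega
  have hn : (-x).toNat = x.natAbs := by omega
  simp only [wojcikMu, wojcikPsiL, wojcikPsiR, if_neg hx', if_neg hx.ne, norm_mul, norm_pow, hn]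
  ring

end Measure

theorem wojcikMu_I_mul_of_ne_zero {ω : ℂ} (hω : ‖ω‖ = 1) (α θ : ℂ) {x : ℤ} (hx : x ≠ 0) :
    wojcikMu α (I * α) ω θ x = 2 * ‖α‖ ^ 2 * ‖θ‖ ^ (2 * x.natAbs) * (2 - ω.re - ω.im) := by
  rcases hx.lt_or_gt with hneg | hpos
  · rw [wojcikMu_of_neg _ _ _ _ hneg, norm_sq_sub_one_mul_I_mul_add_mul hω, norm_mul, norm_I,
      one_mul]
    ring
  · rw [wojcikMu_of_pos _ _ _ _ hpos, norm_sq_one_sub_mul_add_mul_I_mul hω]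
    ring

theorem wojcik_stationary_measure_beta_eq_i_alpha_general
    (φ : ℝ) (ω α β θ : ℂ)
    (hω : ω = Complex.exp (2 * (Real.pi : ℂ) * Complex.I * (φ : ℂ)))
    (hβ : β = Complex.I * α)
    (hθ : θ ^ 2 = ω / (ω ^ 2 - 3 * ω + 1 - Complex.I * (ω ^ 2 - 1))) :
    ‖θ‖ ^ 2 =
      1 / (3 - 2 * Real.cos (2 * Real.pi * φ) - 2 * Real.sin (2 * Real.pi * φ)) ∧
    wojcikMu α β ω θ 0 = 2 * ‖α‖ ^ 2 ∧
    (∀ x : ℤ, x ≠ 0 →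
      wojcikMu α β ω θ x =
        2 * ‖α‖ ^ 2 * ‖θ‖ ^ (2 * x.natAbs) *
          (2 - Real.cos (2 * Real.pi * φ) - Real.sin (2 * Real.pi * φ))) ∧
    (∀ x : ℤ, wojcikMu α β ω θ (-x) = wojcikMu α β ω θ x) := by
  have hω' : ω = exp ((2 * Real.pi * φ : ℝ) * I) := by rw [hω]; push_cast; ring_nf
  have hnorm : ‖ω‖ = 1 := hω' ▸ norm_exp_ofReal_mul_I _
  have hre : ω.re = Real.cos (2 * Real.pi * φ) := hω' ▸ exp_ofReal_mul_I_re _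
  have him : ω.im = Real.sin (2 * Real.pi * φ) := hω' ▸ exp_ofReal_mul_I_im _
  have hμ : ∀ x : ℤ, x ≠ 0 → wojcikMu α β ω θ x =
      2 * ‖α‖ ^ 2 * ‖θ‖ ^ (2 * x.natAbs) * (2 - ω.re - ω.im) := fun x hx => by
    rw [hβ, wojcikMu_I_mul_of_ne_zero hnorm α θ hx]
  refine ⟨?_, ?_, ?_, fun x => ?_⟩
  · rw [← hre, ← him, norm_sq_of_sq_eq_wojcik hnorm hθ]
  · rw [wojcikMu_zero, hβ, norm_mul, norm_I, one_mul]
    ring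
  · simpa only [hre, him] using hμ
  · rcases eq_or_ne x 0 with rfl | hx
    · rw [neg_zero]
    · rw [hμ x hx, hμ (-x) (neg_ne_zero.2 hx), Int.natAbs_neg]

theorem wojcik_stationary_measure_beta_eq_i_alpha
    (φ : ℝ) (hφ : φ ∈ Set.Ioo (0 : ℝ) 1) (ω α β θ : ℂ)
    (hω : ω = Complex.exp (2 * (Real.pi : ℂ) * Complex.I * (φ : ℂ)))
    (hβ : β = Complex.I * α)
    (hθ : θ ^ 2 = ω / (ω ^ 2 - 3 * ω + 1 - Complex.I * (ω ^ 2 - 1))) :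
    ‖θ‖ ^ 2 =
      1 / (3 - 2 * Real.cos (2 * Real.pi * φ) - 2 * Real.sin (2 * Real.pi * φ)) ∧
    wojcikMu α β ω θ 0 = 2 * ‖α‖ ^ 2 ∧
    (∀ x : ℤ, x ≠ 0 →
      wojcikMu α β ω θ x =
        2 * ‖α‖ ^ 2 * ‖θ‖ ^ (2 * x.natAbs) *
          (2 - Real.cos (2 * Real.pi * φ) - Real.sin (2 * Real.pi * φ))) ∧
    (∀ x : ℤ, wojcikMu α β ω θ (-x) = wojcikMu α β ω θ x) :=
  wojcik_stationary_measure_beta_eq_i_alpha_general φ ω α β θ hω hβ hθ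
end
end

section
/- Let ω, λ ∈ ℂ with λ ≠ 0, and let Ψ^L, Ψ^R : ℤ → ℂ satisfy the eigenvalue equations of the Wojcik model with eigenvalue λ and phase ω. Let z ∈ ℂ, z ≠ 0, be such that the families (Ψ^L(x) z^x)_{x ≥ 1} and (Ψ^R(x) z^x)_{x ≥ 1} are absolutely summable, and set f^L_+(z) = Σ_{x=1}^∞ Ψ^L(x) z^x, f^R_+(z) = Σ_{x=1}^∞ Ψ^R(x) z^x, α = Ψ^L(0), β = Ψ^R(0). Then (λ − 1/(√2 z)) f^L_+(z) − (1/(√2 z)) f^R_+(z) = −λα and −(z/√2) f^L_+(z) + (λ + z/√2) f^R_+(z) = ωz(α−β)/√2. -/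
noncomputable section

/-! On `x ≥ 0` the left equation only sees coins at sites `≥ 1`, and the right equation
sees the defect `ω` only at `x = 1`. Multiplying the equations by `z ^ (x + 1)` and summing
over `x ≥ 0` therefore gives two linear relations between `f^L_+(z)`, `f^R_+(z)`, `Ψ^L(0)` and
`Ψ^R(0)`, and since `z ≠ 0` these are the two stated identities. -/

namespace WojcikEigenEq

variable {ω lam : ℂ} {ΨL ΨR : ℤ → ℂ}

theorem lam_mul_left_natCast (heig : WojcikEigenEq ω lam ΨL ΨR) (n : ℕ) :
    lam * ΨL n = (ΨL (n + 1) + ΨR (n + 1)) / (Real.sqrt 2 : ℂ) := by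
  have hne : (n : ℤ) + 1 ≠ 0 := by omega
  rw [(heig n).1, wojcikCoin, if_neg hne, one_div_mul_eq_div]

theorem lam_mul_right_natCast_add_two (heig : WojcikEigenEq ω lam ΨL ΨR) (n : ℕ) :
    lam * ΨR (n + 2) = (ΨL (n + 1) - ΨR (n + 1)) / (Real.sqrt 2 : ℂ) := by
  have hne : (n : ℤ) + 1 ≠ 0 := by omega
  rw [(heig (n + 2)).2, show (n : ℤ) + 2 - 1 = n + 1 by ring, wojcikCoin, if_neg hne,
    one_div_mul_eq_div]

theorem lam_mul_right_one (heig : WojcikEigenEq ω lam ΨL ΨR) :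
    lam * ΨR 1 = ω * (ΨL 0 - ΨR 0) / (Real.sqrt 2 : ℂ) := by
  rw [(heig 1).2, sub_self, wojcikCoin, if_pos rfl, div_mul_eq_mul_div]

variable {z fL fR : ℂ}

theorem lam_mul_genFun_left (heig : WojcikEigenEq ω lam ΨL ΨR)
    (hfL : HasSum (fun n : ℕ => ΨL (n + 1) * z ^ (n + 1)) fL)
    (hfR : HasSum (fun n : ℕ => ΨR (n + 1) * z ^ (n + 1)) fR) :
    lam * z * (ΨL 0 + fL) = (fL + fR) / (Real.sqrt 2 : ℂ) := by
  have htail : HasSum (fun n : ℕ => lam * ΨL (n + 1 : ℕ) * z ^ (n + 1 + 1)) (lam * z * fL) := by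
    refine (hfL.mul_left (lam * z)).congr_fun fun n => ?_
    push_cast
    ring
  have hshift := HasSum.zero_add (f := fun n : ℕ => lam * ΨL n * z ^ (n + 1)) htail
  have hrec : HasSum (fun n : ℕ => lam * ΨL n * z ^ (n + 1)) ((fL + fR) / (Real.sqrt 2 : ℂ)) := by
    refine ((hfL.add hfR).div_const (Real.sqrt 2 : ℂ)).congr_fun fun n => ?_
    rw [heig.lam_mul_left_natCast n]
    ring
  rw [← hshift.unique hrec]
  simp only [CharP.cast_eq_zero, zero_add, pow_one]
  ring

theorem lam_mul_genFun_right (heig : WojcikEigenEq ω lam ΨL ΨR)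
    (hfL : HasSum (fun n : ℕ => ΨL (n + 1) * z ^ (n + 1)) fL)
    (hfR : HasSum (fun n : ℕ => ΨR (n + 1) * z ^ (n + 1)) fR) :
    lam * fR = z * (ω * (ΨL 0 - ΨR 0) + fL - fR) / (Real.sqrt 2 : ℂ) := by
  have htail : HasSum (fun n : ℕ => lam * ΨR ((n + 1 : ℕ) + 1) * z ^ (n + 1 + 1))
      (z * (fL - fR) / (Real.sqrt 2 : ℂ)) := by
    refine (((hfL.sub hfR).mul_left z).div_const (Real.sqrt 2 : ℂ)).congr_fun fun n => ?_
    rw [Nat.cast_succ, add_assoc, one_add_one_eq_two, heig.lam_mul_right_natCast_add_two n]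
    ring
  have hshift := HasSum.zero_add (f := fun n : ℕ => lam * ΨR (n + 1) * z ^ (n + 1)) htail
  have hseries : HasSum (fun n : ℕ => lam * ΨR (n + 1) * z ^ (n + 1)) (lam * fR) := by
    simpa only [mul_assoc] using hfR.mul_left lam
  rw [hseries.unique hshift]
  simp only [CharP.cast_eq_zero, zero_add, pow_one]
  rw [heig.lam_mul_right_one]
  ring

end WojcikEigenEq

theorem wojcik_generating_function_positive_part_general
    (ω lam : ℂ) (ΨL ΨR : ℤ → ℂ)
    (heig : WojcikEigenEq ω lam ΨL ΨR)
    (z : ℂ) (hz : z ≠ 0)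
    (hL : Summable fun n : ℕ => ‖ΨL ((n : ℤ) + 1) * z ^ (n + 1)‖)
    (hR : Summable fun n : ℕ => ‖ΨR ((n : ℤ) + 1) * z ^ (n + 1)‖)
    (fL fR α β : ℂ)
    (hfL : fL = ∑' n : ℕ, ΨL ((n : ℤ) + 1) * z ^ (n + 1))
    (hfR : fR = ∑' n : ℕ, ΨR ((n : ℤ) + 1) * z ^ (n + 1))
    (hα : α = ΨL 0) (hβ : β = ΨR 0) :
    (lam - 1 / ((Real.sqrt 2 : ℂ) * z)) * fL - 1 / ((Real.sqrt 2 : ℂ) * z) * fR = -lam * α ∧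
    -(z / (Real.sqrt 2 : ℂ)) * fL + (lam + z / (Real.sqrt 2 : ℂ)) * fR =
      ω * z * (α - β) / (Real.sqrt 2 : ℂ) := by
  have hsL : HasSum (fun n : ℕ => ΨL (n + 1) * z ^ (n + 1)) fL := hfL ▸ hL.of_norm.hasSum
  have hsR : HasSum (fun n : ℕ => ΨR (n + 1) * z ^ (n + 1)) fR := hfR ▸ hR.of_norm.hasSum
  have hleft := heig.lam_mul_genFun_left hsL hsR
  have hright := heig.lam_mul_genFun_right hsL hsR
  subst hα hβ
  field_simp at hleft hright
  constructor
  · field_simp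
    linear_combination hleft
  · field_simp
    linear_combination hright

theorem wojcik_generating_function_positive_part
    (ω lam : ℂ) (hlam : lam ≠ 0) (ΨL ΨR : ℤ → ℂ)
    (heig : WojcikEigenEq ω lam ΨL ΨR)
    (z : ℂ) (hz : z ≠ 0)
    (hL : Summable fun n : ℕ => ‖ΨL ((n : ℤ) + 1) * z ^ (n + 1)‖)
    (hR : Summable fun n : ℕ => ‖ΨR ((n : ℤ) + 1) * z ^ (n + 1)‖)
    (fL fR α β : ℂ)
    (hfL : fL = ∑' n : ℕ, ΨL ((n : ℤ) + 1) * z ^ (n + 1))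
    (hfR : fR = ∑' n : ℕ, ΨR ((n : ℤ) + 1) * z ^ (n + 1))
    (hα : α = ΨL 0) (hβ : β = ΨR 0) :
    (lam - 1 / ((Real.sqrt 2 : ℂ) * z)) * fL - 1 / ((Real.sqrt 2 : ℂ) * z) * fR = -lam * α ∧
    -(z / (Real.sqrt 2 : ℂ)) * fL + (lam + z / (Real.sqrt 2 : ℂ)) * fR =
      ω * z * (α - β) / (Real.sqrt 2 : ℂ) :=
  wojcik_generating_function_positive_part_general ω lam ΨL ΨR heig z hz hL hR fL fR α β hfL hfR hα
    hβ
end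
end

section
/- Let φ ∈ (0,1), ω = e^{2πiφ}, α ∈ ℂ with α ≠ 0, β = iα, and λ ∈ ℂ with λ ≠ 0. If (√2/(λα))·((−λ² + ω/2)α − (ω/2)β) = ω(α−β)/(√2 λ((ω−1)α − ωβ)), then λ² = ω[(1−2ω+ω²) − i(1−ω+ω²)]/(1−2ω+2ω²). (The denominators (ω−1)α−ωβ and 1−2ω+2ω² are automatically nonzero since |ω| = 1.) -/
/-!
Substituting `β = iα` and clearing denominators turns the hypothesis into the linear equation
`2 λ² D = ω (1 - i) (D - 1)` in `λ²`, where `D = ω (1 - i) - 1`. Since `|ω| = 1` while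
`|1 ± i| = √2`, neither `D` nor `D' = ω (1 + i) - 1` vanishes, and `1 - 2ω + 2ω² = D D'`;
multiplying by `D'` gives the formula.
-/

open Complex

lemma norm_exp_two_pi_mul_I_mul_ofReal (φ : ℝ) :
    ‖exp (2 * (Real.pi : ℂ) * I * (φ : ℂ))‖ = 1 := by
  rw [norm_exp]
  simp

lemma mul_ne_one_of_norm_eq_one {𝕜 : Type*} [NormedDivisionRing 𝕜] {ω c : 𝕜}
    (hω : ‖ω‖ = 1) (hc : ‖c‖ ≠ 1) : ω * c ≠ 1 := fun h =>
  hc (by simpa [hω] using congrArg norm h)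

lemma norm_one_sub_I_ne_one : ‖(1 : ℂ) - I‖ ≠ 1 := by
  rw [norm_def, normSq_apply]
  norm_num

lemma norm_one_add_I_ne_one : ‖(1 : ℂ) + I‖ ≠ 1 := by
  rw [norm_def, normSq_apply]
  norm_num

lemma one_sub_two_mul_add_two_mul_sq_ne_zero {ω : ℂ} (hω : ‖ω‖ = 1) :
    1 - 2 * ω + 2 * ω ^ 2 ≠ 0 := by
  have hfac : 1 - 2 * ω + 2 * ω ^ 2 = (ω * (1 - I) - 1) * (ω * (1 + I) - 1) := by
    linear_combination ω ^ 2 * I_sq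
  rw [hfac]
  exact mul_ne_zero (sub_ne_zero.2 (mul_ne_one_of_norm_eq_one hω norm_one_sub_I_ne_one))
    (sub_ne_zero.2 (mul_ne_one_of_norm_eq_one hω norm_one_add_I_ne_one))

lemma two_mul_sq_mul_eq_of_decay_eq {ω α lam : ℂ} (hα : α ≠ 0) (hlam : lam ≠ 0)
    (hD : ω * (1 - I) - 1 ≠ 0)
    (h : (Real.sqrt 2 : ℂ) / (lam * α) * ((-lam ^ 2 + ω / 2) * α - ω / 2 * (I * α)) =
         ω * (α - I * α) / ((Real.sqrt 2 : ℂ) * lam * ((ω - 1) * α - ω * (I * α)))) :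
    2 * lam ^ 2 * (ω * (1 - I) - 1) = ω * (1 - I) * (ω * (1 - I) - 2) := by
  have hsqrt : ((Real.sqrt 2 : ℝ) : ℂ) ^ 2 = 2 := by
    norm_cast
    exact Real.sq_sqrt zero_le_two
  have hsqrt_ne : ((Real.sqrt 2 : ℝ) : ℂ) ≠ 0 := by
    norm_cast
    positivity
  have hden : (ω - 1) * α - ω * (I * α) = α * (ω * (1 - I) - 1) := by ring
  rw [hden] at h
  field_simp at h
  rw [hsqrt] at h
  linear_combination (-1 / 2 : ℂ) * h

theorem wojcik_lambda_sq_beta_eq_i_alpha_general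
    (φ : ℝ) (ω α β lam : ℂ)
    (hω : ω = Complex.exp (2 * (Real.pi : ℂ) * Complex.I * (φ : ℂ)))
    (hα : α ≠ 0) (hβ : β = Complex.I * α) (hlam : lam ≠ 0)
    (h : (Real.sqrt 2 : ℂ) / (lam * α) * ((-lam ^ 2 + ω / 2) * α - ω / 2 * β) =
         ω * (α - β) / ((Real.sqrt 2 : ℂ) * lam * ((ω - 1) * α - ω * β))) :
    lam ^ 2 =
      ω * ((1 - 2 * ω + ω ^ 2) - Complex.I * (1 - ω + ω ^ 2)) / (1 - 2 * ω + 2 * ω ^ 2) := by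
  have hω_norm : ‖ω‖ = 1 := hω ▸ norm_exp_two_pi_mul_I_mul_ofReal φ
  have hD : ω * (1 - I) - 1 ≠ 0 :=
    sub_ne_zero.2 (mul_ne_one_of_norm_eq_one hω_norm norm_one_sub_I_ne_one)
  subst hβ
  have key := two_mul_sq_mul_eq_of_decay_eq hα hlam hD h
  rw [eq_div_iff (one_sub_two_mul_add_two_mul_sq_ne_zero hω_norm)]
  linear_combination (ω * (1 + I) - 1) / 2 * key
    + (lam ^ 2 * ω ^ 2 + (ω ^ 2 - ω ^ 3 + ω ^ 3 * I) / 2) * I_sq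

theorem wojcik_lambda_sq_beta_eq_i_alpha
    (φ : ℝ) (hφ : φ ∈ Set.Ioo (0 : ℝ) 1) (ω α β lam : ℂ)
    (hω : ω = Complex.exp (2 * (Real.pi : ℂ) * Complex.I * (φ : ℂ)))
    (hα : α ≠ 0) (hβ : β = Complex.I * α) (hlam : lam ≠ 0)
    (h : (Real.sqrt 2 : ℂ) / (lam * α) * ((-lam ^ 2 + ω / 2) * α - ω / 2 * β) =
         ω * (α - β) / ((Real.sqrt 2 : ℂ) * lam * ((ω - 1) * α - ω * β))) :
    lam ^ 2 =
      ω * ((1 - 2 * ω + ω ^ 2) - Complex.I * (1 - ω + ω ^ 2)) / (1 - 2 * ω + 2 * ω ^ 2) :=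
  wojcik_lambda_sq_beta_eq_i_alpha_general φ ω α β lam hω hα hβ hlam h
end

section
/- Let φ ∈ (0,1), ω = e^{2πiφ}, α ∈ ℂ with α ≠ 0, β = iα, and let λ ∈ ℂ satisfy λ² = ω[(1−2ω+ω²) − i(1−ω+ω²)]/(1−2ω+2ω²). Then ω²(α+β)²/(2λ²(ωα + (ω−1)β)²) = ω/(ω²−3ω+1−i(ω²−1)), where all appearing denominators are nonzero. -/
/-!
On the unit circle the three linear factors `(1 + i)ω - i`, `(1 - i)ω + i` and `ω - (1 + i)`
never vanish, since their roots have modulus `1/√2`, `1/√2` and `√2`. Every expression in the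
statement is, up to units, a product of these factors: with `β = iα` one has
`ωα + (ω - 1)β = ((1 + i)ω - i)α`, the numerator and denominator of `λ²` factor as
`(ω - 1 - i)((1 - i)ω + i)` and `((1 + i)ω - i)((1 - i)ω + i)`, and
`ω² - 3ω + 1 - i(ω² - 1) = -i(ω - 1 - i)((1 + i)ω - i)`. After cancelling, both sides equal
`iω / ((ω - 1 - i)((1 + i)ω - i))`.
-/

open Complex

theorem mul_add_ne_zero_of_norm_eq_one {R : Type*} [NormedDivisionRing R] {ω a b : R}
    (hω : ‖ω‖ = 1) (hab : ‖a‖ ≠ ‖b‖) : a * ω + b ≠ 0 := by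
  intro h
  apply hab
  rw [← mul_one ‖a‖, ← hω, ← norm_mul, eq_neg_of_add_eq_zero_left h, norm_neg]

namespace Complex

theorem norm_one_add_I_s12 : ‖(1 : ℂ) + I‖ = √2 := by
  simpa [one_add_one_eq_two] using norm_add_mul_I 1 1

theorem norm_one_sub_I_s12 : ‖(1 : ℂ) - I‖ = √2 := by
  simpa [sub_eq_add_neg, one_add_one_eq_two] using norm_add_mul_I 1 (-1)

theorem norm_exp_two_pi_I_mul_ofReal (φ : ℝ) : ‖exp (2 * (Real.pi : ℂ) * I * φ)‖ = 1 := by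
  rw [show 2 * (Real.pi : ℂ) * I * φ = (2 * Real.pi * φ : ℝ) * I by push_cast; ring]
  exact norm_exp_ofReal_mul_I _

end Complex

section UnitCircle

variable {ω : ℂ} (hω : ‖ω‖ = 1)
include hω

theorem one_add_I_mul_sub_I_ne_zero : (1 + I) * ω - I ≠ 0 := by
  rw [sub_eq_add_neg]
  refine mul_add_ne_zero_of_norm_eq_one hω ?_
  rw [norm_one_add_I_s12, norm_neg, norm_I]
  simp

theorem one_sub_I_mul_add_I_ne_zero : (1 - I) * ω + I ≠ 0 := by
  refine mul_add_ne_zero_of_norm_eq_one hω ?_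
  rw [norm_one_sub_I_s12, norm_I]
  simp

theorem sub_one_sub_I_ne_zero : ω - 1 - I ≠ 0 := by
  rw [sub_sub, sub_eq_add_neg, ← one_mul ω]
  refine mul_add_ne_zero_of_norm_eq_one hω ?_
  rw [norm_neg, norm_one_add_I_s12, norm_one, ne_comm]
  simp

end UnitCircle

theorem one_sub_two_mul_add_two_mul_sq_eq (ω : ℂ) :
    1 - 2 * ω + 2 * ω ^ 2 = ((1 + I) * ω - I) * ((1 - I) * ω + I) := by
  linear_combination (ω - 1) ^ 2 * I_sq

theorem wojcik_lam_sq_numerator_eq (ω : ℂ) :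
    (1 - 2 * ω + ω ^ 2) - I * (1 - ω + ω ^ 2) = (ω - 1 - I) * ((1 - I) * ω + I) := by
  linear_combination (1 - ω) * I_sq

theorem wojcik_theta_denominator_eq (ω : ℂ) :
    ω ^ 2 - 3 * ω + 1 - I * (ω ^ 2 - 1) = -I * ((ω - 1 - I) * ((1 + I) * ω - I)) := by
  linear_combination (ω ^ 2 - (3 + I) * ω + 1 + I) * I_sq

theorem wojcik_theta_sq_beta_eq_i_alpha_general
    (φ : ℝ) (ω α β lam : ℂ)
    (hω : ω = Complex.exp (2 * (Real.pi : ℂ) * Complex.I * (φ : ℂ)))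
    (hα : α ≠ 0) (hβ : β = Complex.I * α)
    (hlam : lam ^ 2 =
      ω * ((1 - 2 * ω + ω ^ 2) - Complex.I * (1 - ω + ω ^ 2)) / (1 - 2 * ω + 2 * ω ^ 2)) :
    2 * lam ^ 2 * (ω * α + (ω - 1) * β) ^ 2 ≠ 0 ∧
    ω ^ 2 - 3 * ω + 1 - Complex.I * (ω ^ 2 - 1) ≠ 0 ∧
    ω ^ 2 * (α + β) ^ 2 / (2 * lam ^ 2 * (ω * α + (ω - 1) * β) ^ 2) =
      ω / (ω ^ 2 - 3 * ω + 1 - Complex.I * (ω ^ 2 - 1)) := by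
  have hω1 : ‖ω‖ = 1 := hω ▸ norm_exp_two_pi_I_mul_ofReal φ
  have hω0 : ω ≠ 0 := norm_ne_zero_iff.mp (hω1.trans_ne one_ne_zero)
  have hp := one_add_I_mul_sub_I_ne_zero hω1
  have hq := one_sub_I_mul_add_I_ne_zero hω1
  have hr := sub_one_sub_I_ne_zero hω1
  have hlam' : lam ^ 2 = ω * (ω - 1 - I) / ((1 + I) * ω - I) := by
    rw [hlam, wojcik_lam_sq_numerator_eq, one_sub_two_mul_add_two_mul_sq_eq,
      ← mul_assoc, mul_div_mul_right _ _ hq]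
  have hlin : ω * α + (ω - 1) * β = ((1 + I) * ω - I) * α := by rw [hβ]; ring
  rw [hlin, hlam', hβ, wojcik_theta_denominator_eq]
  refine ⟨by simp [hp, hr, hα, hω0], by simp [hp, hr], ?_⟩
  have hsq : (α + I * α) ^ 2 = 2 * I * α ^ 2 := by linear_combination α ^ 2 * I_sq
  rw [hsq]
  -- as an atom, `p` is seen by `field_simp` to be nonzero via `hp`
  set p := (1 + I) * ω - I
  field_simp
  linear_combination I_sq

theorem wojcik_theta_sq_beta_eq_i_alpha
    (φ : ℝ) (hφ : φ ∈ Set.Ioo (0 : ℝ) 1) (ω α β lam : ℂ)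
    (hω : ω = Complex.exp (2 * (Real.pi : ℂ) * Complex.I * (φ : ℂ)))
    (hα : α ≠ 0) (hβ : β = Complex.I * α)
    (hlam : lam ^ 2 =
      ω * ((1 - 2 * ω + ω ^ 2) - Complex.I * (1 - ω + ω ^ 2)) / (1 - 2 * ω + 2 * ω ^ 2)) :
    2 * lam ^ 2 * (ω * α + (ω - 1) * β) ^ 2 ≠ 0 ∧
    ω ^ 2 - 3 * ω + 1 - Complex.I * (ω ^ 2 - 1) ≠ 0 ∧
    ω ^ 2 * (α + β) ^ 2 / (2 * lam ^ 2 * (ω * α + (ω - 1) * β) ^ 2) =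
      ω / (ω ^ 2 - 3 * ω + 1 - Complex.I * (ω ^ 2 - 1)) :=
  wojcik_theta_sq_beta_eq_i_alpha_general φ ω α β lam hω hα hβ hlam
end

section
/- Let φ ∈ (0,1), ω = e^{2πiφ}, α ∈ ℂ with α ≠ 0, β = −iα, and let λ ∈ ℂ satisfy λ² = ω[(1−2ω+ω²) + i(1−ω+ω²)]/(1−2ω+2ω²). Then ω²(α+β)²/(2λ²(ωα + (ω−1)β)²) = ω/(ω²−3ω+1+i(ω²−1)), where all appearing denominators are nonzero. -/
/-!
On the unit circle `ω` avoids the points `(1 ± i)/2` and `1 - i`, which are the only roots of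
the polynomials in `ω` appearing as numerators and denominators, since
`1 - 2ω + 2ω² = 2(ω - (1+i)/2)(ω - (1-i)/2)`,
`(1 - 2ω + ω²) + i(1 - ω + ω²) = (1+i)(ω - (1-i))(ω - (1+i)/2)`,
`ω² - 3ω + 1 + i(ω² - 1) = (1+i)(ω - (1-i))(ω - (1-i)/2)` and, for `β = -iα`,
`ωα + (ω-1)β = (1-i)α(ω - (1-i)/2)`. Cancelling the common factor `ω - (1+i)/2` gives
`2λ²(ω - (1-i)/2)² = ω(ω² - 3ω + 1 + i(ω² - 1))`, and the identity follows.
-/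

open Complex

namespace Wojcik

variable {ω : ℂ}

theorem ne_of_normSq_ne_one {c : ℂ} (hω : ‖ω‖ = 1) (hc : normSq c ≠ 1) : ω ≠ c := by
  rintro rfl
  exact hc (by rw [normSq_eq_norm_sq, hω, one_pow])

theorem ne_half_one_add_I (hω : ‖ω‖ = 1) : ω ≠ (1 + I) / 2 :=
  ne_of_normSq_ne_one hω (by norm_num [normSq_apply])

theorem ne_half_one_sub_I (hω : ‖ω‖ = 1) : ω ≠ (1 - I) / 2 :=
  ne_of_normSq_ne_one hω (by norm_num [normSq_apply])

theorem ne_one_sub_I (hω : ‖ω‖ = 1) : ω ≠ 1 - I :=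
  ne_of_normSq_ne_one hω (by norm_num [normSq_apply])

theorem one_add_I_ne_zero : (1 + I : ℂ) ≠ 0 := by
  simp [Complex.ext_iff]

theorem lam_sq_den_ne_zero (hω : ‖ω‖ = 1) : 1 - 2 * ω + 2 * ω ^ 2 ≠ 0 := by
  have hfac : 1 - 2 * ω + 2 * ω ^ 2 = 2 * (ω - (1 + I) / 2) * (ω - (1 - I) / 2) := by
    linear_combination I_sq / 2
  rw [hfac]
  exact mul_ne_zero (mul_ne_zero two_ne_zero (sub_ne_zero.2 (ne_half_one_add_I hω)))
    (sub_ne_zero.2 (ne_half_one_sub_I hω))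

theorem lam_sq_num_ne_zero (hω : ‖ω‖ = 1) :
    (1 - 2 * ω + ω ^ 2) + I * (1 - ω + ω ^ 2) ≠ 0 := by
  have hfac : (1 - 2 * ω + ω ^ 2) + I * (1 - ω + ω ^ 2) =
      (1 + I) * (ω - (1 - I)) * (ω - (1 + I) / 2) := by
    linear_combination -(ω - (1 + I)) / 2 * I_sq
  rw [hfac]
  exact mul_ne_zero (mul_ne_zero one_add_I_ne_zero (sub_ne_zero.2 (ne_one_sub_I hω)))
    (sub_ne_zero.2 (ne_half_one_add_I hω))

theorem theta_sq_den_ne_zero (hω : ‖ω‖ = 1) : ω ^ 2 - 3 * ω + 1 + I * (ω ^ 2 - 1) ≠ 0 := by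
  have hfac : ω ^ 2 - 3 * ω + 1 + I * (ω ^ 2 - 1) =
      (1 + I) * (ω - (1 - I)) * (ω - (1 - I) / 2) := by
    linear_combination -(3 * ω + I - 1) / 2 * I_sq
  rw [hfac]
  exact mul_ne_zero (mul_ne_zero one_add_I_ne_zero (sub_ne_zero.2 (ne_one_sub_I hω)))
    (sub_ne_zero.2 (ne_half_one_sub_I hω))

theorem two_mul_lam_sq_mul_sq {lam : ℂ} (ha : ω ≠ (1 + I) / 2)
    (hlam : lam ^ 2 * (1 - 2 * ω + 2 * ω ^ 2) = ω * ((1 - 2 * ω + ω ^ 2) + I * (1 - ω + ω ^ 2))) :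
    2 * lam ^ 2 * (ω - (1 - I) / 2) ^ 2 = ω * (ω ^ 2 - 3 * ω + 1 + I * (ω ^ 2 - 1)) := by
  have hcancel : 2 * lam ^ 2 * (ω - (1 - I) / 2) = ω * (1 + I) * (ω - (1 - I)) := by
    refine mul_left_cancel₀ (sub_ne_zero.2 ha) ?_
    linear_combination hlam + (ω * (ω - (1 + I)) / 2 + ω + ω * I - ω ^ 2 - lam ^ 2 / 2) * I_sq
  linear_combination (ω - (1 - I) / 2) * hcancel + ω * (3 * ω + I - 1) / 2 * I_sq

end Wojcik

open Wojcik in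
theorem wojcik_theta_sq_beta_eq_neg_i_alpha_general
    (φ : ℝ) (ω α β lam : ℂ)
    (hω : ω = Complex.exp (2 * (Real.pi : ℂ) * Complex.I * (φ : ℂ)))
    (hα : α ≠ 0) (hβ : β = -Complex.I * α)
    (hlam : lam ^ 2 =
      ω * ((1 - 2 * ω + ω ^ 2) + Complex.I * (1 - ω + ω ^ 2)) / (1 - 2 * ω + 2 * ω ^ 2)) :
    2 * lam ^ 2 * (ω * α + (ω - 1) * β) ^ 2 ≠ 0 ∧
    ω ^ 2 - 3 * ω + 1 + Complex.I * (ω ^ 2 - 1) ≠ 0 ∧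
    ω ^ 2 * (α + β) ^ 2 / (2 * lam ^ 2 * (ω * α + (ω - 1) * β) ^ 2) =
      ω / (ω ^ 2 - 3 * ω + 1 + Complex.I * (ω ^ 2 - 1)) := by
  have hunit : ‖ω‖ = 1 := by simp [hω, norm_exp]
  have hω0 : ω ≠ 0 := by rintro rfl; simp at hunit
  have hlam0 : lam ^ 2 ≠ 0 := by
    rw [hlam]
    exact div_ne_zero (mul_ne_zero hω0 (lam_sq_num_ne_zero hunit)) (lam_sq_den_ne_zero hunit)
  have hsum : α + β = (1 - I) * α := by rw [hβ]; ring
  have hlin : ω * α + (ω - 1) * β = (1 - I) * α * (ω - (1 - I) / 2) := by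
    rw [hβ]; linear_combination α / 2 * I_sq
  have hlin0 : ω * α + (ω - 1) * β ≠ 0 := by
    rw [hlin]
    exact mul_ne_zero (mul_ne_zero (sub_ne_zero.2 (by simp [Complex.ext_iff])) hα)
      (sub_ne_zero.2 (ne_half_one_sub_I hunit))
  have hden : 2 * lam ^ 2 * (ω * α + (ω - 1) * β) ^ 2 ≠ 0 :=
    mul_ne_zero (mul_ne_zero two_ne_zero hlam0) (pow_ne_zero 2 hlin0)
  have hkey := two_mul_lam_sq_mul_sq (ne_half_one_add_I hunit)
    (by rw [hlam, div_mul_cancel₀ _ (lam_sq_den_ne_zero hunit)])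
  refine ⟨hden, theta_sq_den_ne_zero hunit, ?_⟩
  rw [div_eq_div_iff hden (theta_sq_den_ne_zero hunit), hlin, hsum]
  linear_combination -ω * ((1 - I) * α) ^ 2 * hkey

theorem wojcik_theta_sq_beta_eq_neg_i_alpha
    (φ : ℝ) (hφ : φ ∈ Set.Ioo (0 : ℝ) 1) (ω α β lam : ℂ)
    (hω : ω = Complex.exp (2 * (Real.pi : ℂ) * Complex.I * (φ : ℂ)))
    (hα : α ≠ 0) (hβ : β = -Complex.I * α)
    (hlam : lam ^ 2 =
      ω * ((1 - 2 * ω + ω ^ 2) + Complex.I * (1 - ω + ω ^ 2)) / (1 - 2 * ω + 2 * ω ^ 2)) :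
    2 * lam ^ 2 * (ω * α + (ω - 1) * β) ^ 2 ≠ 0 ∧
    ω ^ 2 - 3 * ω + 1 + Complex.I * (ω ^ 2 - 1) ≠ 0 ∧
    ω ^ 2 * (α + β) ^ 2 / (2 * lam ^ 2 * (ω * α + (ω - 1) * β) ^ 2) =
      ω / (ω ^ 2 - 3 * ω + 1 + Complex.I * (ω ^ 2 - 1)) :=
  wojcik_theta_sq_beta_eq_neg_i_alpha_general φ ω α β lam hω hα hβ hlam
end

section
/- Let φ ∈ (0,1) and ω = e^{2πiφ}. Then ω² − 3ω + 1 − i(ω²−1) = ω·(2cos(2πφ) + 2sin(2πφ) − 3); consequently ω/(ω²−3ω+1−i(ω²−1)) = 1/(2cos(2πφ)+2sin(2πφ)−3), which is a negative real number (since 2cos(2πφ)+2sin(2πφ) ≤ 2√2 < 3). -/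
open Complex in
/-- With `ω = exp (z I)` we have `ω + ω⁻¹ = 2 cos z` and `ω - ω⁻¹ = 2 I sin z`, so dividing the
quadratic by `ω` leaves `2 cos z + 2 sin z - 3`. -/
theorem exp_mul_I_quadratic_eq (z : ℂ) :
    exp (z * I) ^ 2 - 3 * exp (z * I) + 1 - I * (exp (z * I) ^ 2 - 1) =
      exp (z * I) * (2 * cos z + 2 * sin z - 3) := by
  have hinv : exp (-z * I) * exp (z * I) = 1 := by rw [← exp_add]; simp
  rw [cos, sin]
  linear_combination (-1 - I) * hinv

theorem two_mul_cos_add_two_mul_sin_lt_three (x : ℝ) :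
    2 * Real.cos x + 2 * Real.sin x < 3 := by
  nlinarith [Real.sin_sq_add_cos_sq x, sq_nonneg (Real.cos x - Real.sin x)]

theorem wojcik_theta_sq_real_beta_eq_i_alpha_general
    (φ : ℝ) (ω : ℂ)
    (hω : ω = Complex.exp (2 * (Real.pi : ℂ) * Complex.I * (φ : ℂ))) :
    ω ^ 2 - 3 * ω + 1 - Complex.I * (ω ^ 2 - 1) =
      ω * ((2 * Real.cos (2 * Real.pi * φ) + 2 * Real.sin (2 * Real.pi * φ) - 3 : ℝ) : ℂ) ∧
    ω / (ω ^ 2 - 3 * ω + 1 - Complex.I * (ω ^ 2 - 1)) =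
      ((1 / (2 * Real.cos (2 * Real.pi * φ) + 2 * Real.sin (2 * Real.pi * φ) - 3) : ℝ) : ℂ) ∧
    (1 / (2 * Real.cos (2 * Real.pi * φ) + 2 * Real.sin (2 * Real.pi * φ) - 3) : ℝ) < 0 := by
  set r : ℝ := 2 * Real.cos (2 * Real.pi * φ) + 2 * Real.sin (2 * Real.pi * φ) - 3
  have hr : r < 0 := sub_neg.mpr (two_mul_cos_add_two_mul_sin_lt_three _)
  have hquad : ω ^ 2 - 3 * ω + 1 - Complex.I * (ω ^ 2 - 1) = ω * (r : ℂ) := by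
    have hω' : ω = Complex.exp ((2 * Real.pi * φ : ℝ) * Complex.I) := by
      rw [hω]; push_cast; ring_nf
    rw [hω', exp_mul_I_quadratic_eq]
    push_cast [r]
    rfl
  have hω0 : ω ≠ 0 := hω ▸ Complex.exp_ne_zero _
  refine ⟨hquad, ?_, one_div_neg.mpr hr⟩
  rw [hquad, div_mul_cancel_left₀ hω0]
  push_cast
  rw [one_div]

theorem wojcik_theta_sq_real_beta_eq_i_alpha
    (φ : ℝ) (hφ : φ ∈ Set.Ioo (0 : ℝ) 1) (ω : ℂ)
    (hω : ω = Complex.exp (2 * (Real.pi : ℂ) * Complex.I * (φ : ℂ))) :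
    ω ^ 2 - 3 * ω + 1 - Complex.I * (ω ^ 2 - 1) =
      ω * ((2 * Real.cos (2 * Real.pi * φ) + 2 * Real.sin (2 * Real.pi * φ) - 3 : ℝ) : ℂ) ∧
    ω / (ω ^ 2 - 3 * ω + 1 - Complex.I * (ω ^ 2 - 1)) =
      ((1 / (2 * Real.cos (2 * Real.pi * φ) + 2 * Real.sin (2 * Real.pi * φ) - 3) : ℝ) : ℂ) ∧
    (1 / (2 * Real.cos (2 * Real.pi * φ) + 2 * Real.sin (2 * Real.pi * φ) - 3) : ℝ) < 0 :=
  wojcik_theta_sq_real_beta_eq_i_alpha_general φ ω hω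
end

section
/- Let ω ∈ ℂ with |ω| = 1. Then 1−2ω+2ω² ≠ 0, and |ω(1−2ω+ω²) − i·ω(1−ω+ω²)| = |1−2ω+2ω²| = |ω(1−2ω+ω²) + i·ω(1−ω+ω²)|. Consequently both complex numbers ω[(1−2ω+ω²) ∓ i(1−ω+ω²)]/(1−2ω+2ω²) have modulus 1. -/
/-!
On the unit circle `conj ω = ω⁻¹`, so each palindromic quadratic `1 - t ω + ω²` equals `ω` times
the real number `2 Re ω - t`. Hence `ω ((1 - ω)² ∓ i (1 - ω + ω²)) = ω² (a ∓ i b)` with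
`a = 2 Re ω - 2`, `b = 2 Re ω - 1` real, whose modulus is `√(a² + b²)` for either sign, and a
direct computation gives `|1 - 2ω + 2ω²|² = a² + b² > 0`.
-/

open ComplexConjugate

namespace Complex

variable {ω : ℂ}

theorem one_sub_mul_add_sq_eq_mul_re (hω : ‖ω‖ = 1) (t : ℝ) :
    1 - t * ω + ω ^ 2 = ω * ((2 * ω.re - t : ℝ) : ℂ) := by
  have hunit : ω * conj ω = 1 := by rw [mul_conj', hω]; norm_num
  have hre : ω + conj ω = ((2 * ω.re : ℝ) : ℂ) := add_conj ω
  push_cast at hre ⊢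
  linear_combination -hunit + ω * hre

theorem normSq_one_sub_two_mul_add_two_mul_sq (hω : ‖ω‖ = 1) :
    normSq (1 - 2 * ω + 2 * ω ^ 2) = (2 * ω.re - 2) ^ 2 + (2 * ω.re - 1) ^ 2 := by
  have hcircle : ω.re ^ 2 + ω.im ^ 2 = 1 := by
    rw [sq, sq, ← normSq_apply, normSq_eq_norm_sq, hω, one_pow]
  have hfactor : 1 - 2 * ω + 2 * ω ^ 2 = ω * (((2 * ω.re - 2 : ℝ) : ℂ) + ω) := by
    have h := one_sub_mul_add_sq_eq_mul_re hω 2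
    push_cast at h ⊢
    linear_combination h
  rw [hfactor, normSq_mul, normSq_eq_norm_sq, hω, normSq_apply]
  simp only [add_re, add_im, ofReal_re, ofReal_im]
  linear_combination hcircle

theorem one_sub_two_mul_add_two_mul_sq_ne_zero (hω : ‖ω‖ = 1) : 1 - 2 * ω + 2 * ω ^ 2 ≠ 0 := by
  rw [← normSq_pos, normSq_one_sub_two_mul_add_two_mul_sq hω]
  nlinarith [sq_nonneg (4 * ω.re - 3)]

theorem norm_mul_add_signed_I_mul_eq_norm (hω : ‖ω‖ = 1) {ε : ℝ} (hε : ε ^ 2 = 1) :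
    ‖ω * ((1 - 2 * ω + ω ^ 2) + ε * I * (1 - ω + ω ^ 2))‖ = ‖1 - 2 * ω + 2 * ω ^ 2‖ := by
  have hA := one_sub_mul_add_sq_eq_mul_re hω 2
  have hB := one_sub_mul_add_sq_eq_mul_re hω 1
  push_cast at hA hB
  have hreal : ω * ((1 - 2 * ω + ω ^ 2) + ε * I * (1 - ω + ω ^ 2)) =
      ω ^ 2 * (((2 * ω.re - 2 : ℝ) : ℂ) + ((ε * (2 * ω.re - 1) : ℝ) : ℂ) * I) := by
    push_cast
    linear_combination ω * hA + ε * I * ω * hB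
  rw [hreal, norm_mul, norm_pow, hω, one_pow, one_mul, norm_add_mul_I, norm_def,
    normSq_one_sub_two_mul_add_two_mul_sq hω]
  congr 1
  linear_combination (2 * ω.re - 1) ^ 2 * hε

end Complex

theorem wojcik_lambda_sq_unit_modulus
    (ω : ℂ) (hω : ‖ω‖ = 1) :
    1 - 2 * ω + 2 * ω ^ 2 ≠ 0 ∧
    ‖(ω * (1 - 2 * ω + ω ^ 2) - Complex.I * ω * (1 - ω + ω ^ 2))‖ =
      ‖(1 - 2 * ω + 2 * ω ^ 2)‖ ∧
    ‖(ω * (1 - 2 * ω + ω ^ 2) + Complex.I * ω * (1 - ω + ω ^ 2))‖ =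
      ‖(1 - 2 * ω + 2 * ω ^ 2)‖ ∧
    ‖
      (ω * ((1 - 2 * ω + ω ^ 2) - Complex.I * (1 - ω + ω ^ 2)) / (1 - 2 * ω + 2 * ω ^ 2))‖ = 1 ∧
    ‖
      (ω * ((1 - 2 * ω + ω ^ 2) + Complex.I * (1 - ω + ω ^ 2)) / (1 - 2 * ω + 2 * ω ^ 2))‖ = 1 := by
  have hD := Complex.one_sub_two_mul_add_two_mul_sq_ne_zero hω
  have hminus := Complex.norm_mul_add_signed_I_mul_eq_norm hω (ε := -1) (by norm_num)
  have hplus := Complex.norm_mul_add_signed_I_mul_eq_norm hω (ε := 1) (by norm_num)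
  push_cast at hminus hplus
  have hdiv (z : ℂ) (hz : ‖z‖ = ‖1 - 2 * ω + 2 * ω ^ 2‖) : ‖z / (1 - 2 * ω + 2 * ω ^ 2)‖ = 1 := by
    rw [norm_div, hz, div_self (norm_ne_zero_iff.mpr hD)]
  refine ⟨hD, ?_, ?_, hdiv _ ?_, hdiv _ ?_⟩
  · rw [← hminus]; congr 1; ring
  · rw [← hplus]; congr 1; ring
  · rw [← hminus]; congr 1; ring
  · rw [← hplus]; congr 1; ring
end
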